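/- Let f : [a,b] → ℝ be convex on [a,b] and let a = x₀ < x₁ < … < x_n = b with h_i = x_{i+1} − x_i. Define the trapezoid rule T_n(f) = Σ_{i=0}^{n−1} ((f(x_i) + f(x_{i+1}))/2)·h_i and the remainder Q_n(f) = T_n(f) − ∫_a^b f(t) dt. Then 0 ≤ (1/8)·Σ_{i=0}^{n−1} [ f′₊((x_i + x_{i+1})/2) − f′₋((x_i + x_{i+1})/2) ]·h_i² ≤ Q_n(f) ≤ (1/8)·Σ_{i=0}^{n−1} [ f′₋(x_{i+1}) − f′₊(x_i) ]·h_i². -/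

import Mathlib

/-!
On a cell `[c, d]` with midpoint `m` and `h = d - c`, integrate affine bounds for `f`. The
one-sided tangents at `c` (over `[c, m]`) and at `d` (over `[m, d]`) lie below `f`, which gives
`∫ f ≥ (f c + f d) h / 2 - (f'₋(d) - f'₊(c)) h² / 8`. The chords over `[c, m]` and `[m, d]` lie
above `f`, so `∫ f ≤ h (f c + 2 f m + f d) / 4`, and the one-sided tangents at `m` give
`f c + f d - 2 f m ≥ (f'₊(m) - f'₋(m)) h / 2`. Summing over the cells gives the composite bounds.
-/

open MeasureTheory Set intervalIntegral Finset

theorem integral_const_add_mul_sub (A B r c d : ℝ) :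
    ∫ t in c..d, (A + B * (t - r)) = A * (d - c) + B * ((d - r) ^ 2 - (c - r) ^ 2) / 2 := by
  rw [intervalIntegral.integral_comp_sub_right (fun t => A + B * t),
    intervalIntegral.integral_add intervalIntegrable_const
      ((continuous_const_mul B).intervalIntegrable _ _),
    intervalIntegral.integral_const, intervalIntegral.integral_const_mul, integral_id, smul_eq_mul]
  ring

theorem continuousOn_Icc_of_hasDerivWithinAt_Ici_Iic {f Dp Dm : ℝ → ℝ} {a b : ℝ}
    (hp : ∀ y ∈ Set.Ico a b, HasDerivWithinAt f (Dp y) (Set.Ici y) y)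
    (hm : ∀ y ∈ Set.Ioc a b, HasDerivWithinAt f (Dm y) (Set.Iic y) y) :
    ContinuousOn f (Set.Icc a b) := by
  intro y hy
  have right (hyb : y < b) : ContinuousWithinAt f (Set.Ici y) y :=
    (hp y ⟨hy.1, hyb⟩).continuousWithinAt
  have left (hay : a < y) : ContinuousWithinAt f (Set.Iic y) y :=
    (hm y ⟨hay, hy.2⟩).continuousWithinAt
  rcases hy.1.eq_or_lt with rfl | hay <;> rcases hy.2.eq_or_lt with rfl | hyb
  · simp
  · exact (right hyb).mono fun t ht => ht.1
  · exact (left hay).mono fun t ht => ht.2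
  · exact ((left hay).union (right hyb)).mono fun t _ => le_total t y

theorem intervalIntegrable_const_add_mul_sub (A B r c d : ℝ) :
    IntervalIntegrable (fun t => A + B * (t - r)) volume c d :=
  (by fun_prop : Continuous fun t : ℝ => A + B * (t - r)).intervalIntegrable c d

theorem sub_mul_slope (f : ℝ → ℝ) (a b : ℝ) : (b - a) * slope f a b = f b - f a :=
  sub_smul_slope f a b

namespace ConvexOn

variable {f : ℝ → ℝ} {S : Set ℝ} {c d f' dp dm : ℝ}

theorem add_mul_sub_le_of_hasDerivWithinAt_Ioi (hf : ConvexOn ℝ S f) (hc : c ∈ S) (hd : d ∈ S)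
    (hcd : c ≤ d) (hf' : HasDerivWithinAt f f' (Set.Ioi c) c) : f c + f' * (d - c) ≤ f d := by
  rcases hcd.eq_or_lt with rfl | hcd
  · simp
  have := mul_le_mul_of_nonneg_left (hf.le_slope_of_hasDerivWithinAt_Ioi hc hd hcd hf')
    (sub_nonneg.2 hcd.le)
  rw [sub_mul_slope] at this
  linarith

theorem add_mul_sub_le_of_hasDerivWithinAt_Iio (hf : ConvexOn ℝ S f) (hc : c ∈ S) (hd : d ∈ S)
    (hcd : c ≤ d) (hf' : HasDerivWithinAt f f' (Set.Iio d) d) : f d + f' * (c - d) ≤ f c := by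
  rcases hcd.eq_or_lt with rfl | hcd
  · simp
  have := mul_le_mul_of_nonneg_left (hf.slope_le_of_hasDerivWithinAt_Iio hc hd hcd hf')
    (sub_nonneg.2 hcd.le)
  rw [sub_mul_slope] at this
  linarith

theorem le_add_slope_mul_sub (hf : ConvexOn ℝ S f) (hc : c ∈ S) (hd : d ∈ S) {t : ℝ}
    (ht : t ∈ Set.Icc c d) : f t ≤ f c + slope f c d * (t - c) := by
  rcases ht.1.eq_or_lt with rfl | hct
  · simp
  have htS : t ∈ S := hf.1.ordConnected.out hc hd ht
  have := mul_le_mul_of_nonneg_left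
    (hf.slope_mono hc ⟨htS, hct.ne'⟩ ⟨hd, (hct.trans_le ht.2).ne'⟩ ht.2) (sub_nonneg.2 hct.le)
  rw [sub_mul_slope] at this
  linarith

theorem leftDeriv_le_rightDeriv_of_hasDerivWithinAt (hf : ConvexOn ℝ S f) {x : ℝ}
    (hx : x ∈ interior S) (hm : HasDerivWithinAt f dm (Set.Iio x) x)
    (hp : HasDerivWithinAt f dp (Set.Ioi x) x) : dm ≤ dp := by
  rw [← hm.derivWithin (uniqueDiffWithinAt_Iio x), ← hp.derivWithin (uniqueDiffWithinAt_Ioi x)]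
  exact hf.leftDeriv_le_rightDeriv_of_mem_interior hx

theorem integral_le_trapezoid (hf : ConvexOn ℝ (Set.Icc c d) f) (hcd : c ≤ d)
    (hint : IntervalIntegrable f volume c d) : ∫ t in c..d, f t ≤ (f c + f d) / 2 * (d - c) := by
  have hc : c ∈ Set.Icc c d := left_mem_Icc.2 hcd
  have hd : d ∈ Set.Icc c d := right_mem_Icc.2 hcd
  calc ∫ t in c..d, f t ≤ ∫ t in c..d, (f c + slope f c d * (t - c)) :=
        integral_mono_on hcd hint (intervalIntegrable_const_add_mul_sub _ _ _ _ _)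
          fun t ht => hf.le_add_slope_mul_sub hc hd ht
    _ = (f c + f d) / 2 * (d - c) := by
      rw [integral_const_add_mul_sub]
      linear_combination (d - c) / 2 * sub_mul_slope f c d

theorem le_integral_of_hasDerivWithinAt_Ioi (hf : ConvexOn ℝ (Set.Icc c d) f) (hcd : c ≤ d)
    (hint : IntervalIntegrable f volume c d) (hf' : HasDerivWithinAt f f' (Set.Ioi c) c) :
    f c * (d - c) + f' * (d - c) ^ 2 / 2 ≤ ∫ t in c..d, f t :=
  calc f c * (d - c) + f' * (d - c) ^ 2 / 2 = ∫ t in c..d, (f c + f' * (t - c)) := by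
        rw [integral_const_add_mul_sub]; ring
    _ ≤ ∫ t in c..d, f t :=
      integral_mono_on hcd (intervalIntegrable_const_add_mul_sub _ _ _ _ _) hint fun t ht =>
        hf.add_mul_sub_le_of_hasDerivWithinAt_Ioi (left_mem_Icc.2 hcd) ht ht.1 hf'

theorem le_integral_of_hasDerivWithinAt_Iio (hf : ConvexOn ℝ (Set.Icc c d) f) (hcd : c ≤ d)
    (hint : IntervalIntegrable f volume c d) (hf' : HasDerivWithinAt f f' (Set.Iio d) d) :
    f d * (d - c) - f' * (d - c) ^ 2 / 2 ≤ ∫ t in c..d, f t :=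
  calc f d * (d - c) - f' * (d - c) ^ 2 / 2 = ∫ t in c..d, (f d + f' * (t - d)) := by
        rw [integral_const_add_mul_sub]; ring
    _ ≤ ∫ t in c..d, f t :=
      integral_mono_on hcd (intervalIntegrable_const_add_mul_sub _ _ _ _ _) hint fun t ht =>
        hf.add_mul_sub_le_of_hasDerivWithinAt_Iio ht (right_mem_Icc.2 hcd) ht.2 hf'

theorem trapezoid_sub_integral_le (hf : ConvexOn ℝ (Set.Icc c d) f) (hcd : c ≤ d)
    (hint : IntervalIntegrable f volume c d) (hp : HasDerivWithinAt f dp (Set.Ioi c) c)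
    (hm : HasDerivWithinAt f dm (Set.Iio d) d) :
    (f c + f d) / 2 * (d - c) - ∫ t in c..d, f t ≤ 1 / 8 * ((dm - dp) * (d - c) ^ 2) := by
  have hcm : c ≤ (c + d) / 2 := by linarith
  have hmd : (c + d) / 2 ≤ d := by linarith
  have hmid : (c + d) / 2 ∈ Set.uIcc c d := mem_uIcc_of_le hcm hmd
  have hint₁ := hint.mono_set (uIcc_subset_uIcc_left hmid)
  have hint₂ := hint.mono_set (uIcc_subset_uIcc_right hmid)
  have hf₁ := hf.subset (Icc_subset_Icc_right hmd) (convex_Icc _ _)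
  have hf₂ := hf.subset (Icc_subset_Icc_left hcm) (convex_Icc _ _)
  have h₁ := hf₁.le_integral_of_hasDerivWithinAt_Ioi hcm hint₁ hp
  have h₂ := hf₂.le_integral_of_hasDerivWithinAt_Iio hmd hint₂ hm
  rw [← integral_add_adjacent_intervals hint₁ hint₂]
  linear_combination h₁ + h₂

theorem le_trapezoid_sub_integral (hf : ConvexOn ℝ (Set.Icc c d) f) (hcd : c ≤ d)
    (hint : IntervalIntegrable f volume c d)
    (hm : HasDerivWithinAt f dm (Set.Iio ((c + d) / 2)) ((c + d) / 2))
    (hp : HasDerivWithinAt f dp (Set.Ioi ((c + d) / 2)) ((c + d) / 2)) :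
    1 / 8 * ((dp - dm) * (d - c) ^ 2) ≤ (f c + f d) / 2 * (d - c) - ∫ t in c..d, f t := by
  have hcm : c ≤ (c + d) / 2 := by linarith
  have hmd : (c + d) / 2 ≤ d := by linarith
  have hmid : (c + d) / 2 ∈ Set.uIcc c d := mem_uIcc_of_le hcm hmd
  have hint₁ := hint.mono_set (uIcc_subset_uIcc_left hmid)
  have hint₂ := hint.mono_set (uIcc_subset_uIcc_right hmid)
  have hf₁ := hf.subset (Icc_subset_Icc_right hmd) (convex_Icc _ _)
  have hf₂ := hf.subset (Icc_subset_Icc_left hcm) (convex_Icc _ _)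
  have h₁ := hf₁.integral_le_trapezoid hcm hint₁
  have h₂ := hf₂.integral_le_trapezoid hmd hint₂
  have hc := hf.add_mul_sub_le_of_hasDerivWithinAt_Iio (left_mem_Icc.2 hcd) ⟨hcm, hmd⟩ hcm hm
  have hd := hf.add_mul_sub_le_of_hasDerivWithinAt_Ioi ⟨hcm, hmd⟩ (right_mem_Icc.2 hcd) hmd hp
  rw [← integral_add_adjacent_intervals hint₁ hint₂]
  linear_combination h₁ + h₂ + (d - c) / 4 * (hc + hd)

end ConvexOn

theorem composite_trapezoid_rule_convex
    (a b : ℝ) (f : ℝ → ℝ)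
    (hf : ConvexOn ℝ (Set.Icc a b) f)
    (n : ℕ) (x : ℕ → ℝ)
    (hxa : x 0 = a) (hxb : x n = b)
    (hxmono : ∀ i < n, x i < x (i + 1))
    (Dp Dm : ℝ → ℝ)
    (hDp : ∀ y ∈ Set.Ico a b, HasDerivWithinAt f (Dp y) (Set.Ici y) y)
    (hDm : ∀ y ∈ Set.Ioc a b, HasDerivWithinAt f (Dm y) (Set.Iic y) y) :
    0 ≤ (1 / 8) * ∑ i ∈ Finset.range n,
          (Dp ((x i + x (i + 1)) / 2) - Dm ((x i + x (i + 1)) / 2)) *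
            (x (i + 1) - x i) ^ 2 ∧
      (1 / 8) * (∑ i ∈ Finset.range n,
          (Dp ((x i + x (i + 1)) / 2) - Dm ((x i + x (i + 1)) / 2)) *
            (x (i + 1) - x i) ^ 2) ≤
        (∑ i ∈ Finset.range n, (f (x i) + f (x (i + 1))) / 2 * (x (i + 1) - x i)) -
          (∫ t in a..b, f t) ∧
      (∑ i ∈ Finset.range n, (f (x i) + f (x (i + 1))) / 2 * (x (i + 1) - x i)) -
          (∫ t in a..b, f t) ≤
        (1 / 8) * ∑ i ∈ Finset.range n,
          (Dm (x (i + 1)) - Dp (x i)) * (x (i + 1) - x i) ^ 2 := by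
  have hx : MonotoneOn x (Set.Iic n) := (strictMonoOn_Iic_of_lt_succ hxmono).monotoneOn
  have hcell : ∀ i ∈ range n, x i < x (i + 1) ∧ a ≤ x i ∧ x (i + 1) ≤ b := fun i hi => by
    have hi : i < n := mem_range.1 hi
    exact ⟨hxmono i hi, hxa ▸ hx n.zero_le hi.le i.zero_le, hxb ▸ hx hi (le_refl n) hi⟩
  have hcont := continuousOn_Icc_of_hasDerivWithinAt_Ici_Iic hDp hDm
  have hint : ∀ i ∈ range n, IntervalIntegrable f volume (x i) (x (i + 1)) := fun i hi => by
    obtain ⟨hlt, ha, hb⟩ := hcell i hi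
    exact (hcont.mono (Icc_subset_Icc ha hb)).intervalIntegrable_of_Icc hlt.le
  rw [← hxa, ← hxb, ← sum_integral_adjacent_intervals fun i hi => hint i (mem_range.2 hi),
    ← sum_sub_distrib, mul_sum, mul_sum]
  refine ⟨sum_nonneg fun i hi => ?_, sum_le_sum fun i hi => ?_, sum_le_sum fun i hi => ?_⟩ <;>
    obtain ⟨hlt, ha, hb⟩ := hcell i hi <;>
    have hfi := hf.subset (Icc_subset_Icc ha hb) (convex_Icc _ _)
  · have hmid : (x i + x (i + 1)) / 2 ∈ interior (Set.Icc (x i) (x (i + 1))) := by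
      rw [interior_Icc]; constructor <;> linarith
    have hle := hfi.leftDeriv_le_rightDeriv_of_hasDerivWithinAt hmid
      ((hDm _ ⟨by linarith, by linarith⟩).mono Set.Iio_subset_Iic_self)
      ((hDp _ ⟨by linarith, by linarith⟩).mono Set.Ioi_subset_Ici_self)
    exact mul_nonneg (by norm_num) (mul_nonneg (sub_nonneg.2 hle) (sq_nonneg _))
  · exact hfi.le_trapezoid_sub_integral hlt.le (hint i hi)
      ((hDm _ ⟨by linarith, by linarith⟩).mono Set.Iio_subset_Iic_self)
      ((hDp _ ⟨by linarith, by linarith⟩).mono Set.Ioi_subset_Ici_self)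
  · exact hfi.trapezoid_sub_integral_le hlt.le (hint i hi)
      ((hDp _ ⟨ha, hlt.trans_le hb⟩).mono Set.Ioi_subset_Ici_self)
      ((hDm _ ⟨ha.trans_lt hlt, hb⟩).mono Set.Iio_subset_Iic_self)
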